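/- arXiv:2402.10827 — 2 statements merged into one kernel-verified Lean document; each statement's English description precedes it below -/
import Mathlib

section
/- For every x ∈ c, the set of best approximations of x from c₀ is P_{c₀}(x) = {y ∈ c₀ : ‖x − y‖ = |L(x)|}. In particular, h(x) = x − β_{L(x)} ∈ P_{c₀}(x), and for every real b ≠ 0, P_{c₀}(β_b) = {y ∈ c₀ : ‖β_b − y‖ = |b|}. -/
open scoped ENNReal
open Filter

/-- The real Banach space `ℓ∞` of bounded real sequences; the space `c` of convergent
sequences and its subspace `c₀` are regarded as subsets of `ℓ∞`, with the sup norm. -/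
noncomputable abbrev ellInfty : Type := lp (fun _ : ℕ => ℝ) ∞

/-- The constant sequence `β_b = (b, b, b, …)`. -/
noncomputable def betaSeq (b : ℝ) : ellInfty :=
  ⟨fun _ => b, memℓp_infty (bddAbove_singleton.mono Set.range_const_subset)⟩

/-- The space `c` of convergent real sequences, as a subset of `ℓ∞`. -/
def cSpace : Set ellInfty := {x | ∃ L : ℝ, Tendsto (x : ℕ → ℝ) atTop (nhds L)}

/-- The subspace `c₀` of sequences converging to `0`. -/
def c0 : Set ellInfty := {x | Tendsto (x : ℕ → ℝ) atTop (nhds 0)}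

/-- The set of best approximations of `x` from `c₀`:
`P_{c₀}(x) = {u ∈ c₀ : ‖x − u‖ ≤ ‖x − z‖ for all z ∈ c₀}`. -/
def projC0 (x : ellInfty) : Set ellInfty :=
  {u | u ∈ c0 ∧ ∀ z ∈ c0, ‖x - u‖ ≤ ‖x - z‖}

/-! The distance from `x` to `c₀` is `|L|`: for `z ∈ c₀` the coordinates of `x - z` tend to `L`,
so `|L| ≤ ‖x - z‖`, and `x - β_L ∈ c₀` attains this bound. -/

open Topology

lemma norm_le_norm_of_tendsto {E : Type*} [NormedAddCommGroup E] {f : lp (fun _ : ℕ => E) ∞}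
    {l : E} (hf : Tendsto (f : ℕ → E) atTop (𝓝 l)) : ‖l‖ ≤ ‖f‖ :=
  le_of_tendsto hf.norm <| Eventually.of_forall fun n =>
    lp.norm_apply_le_norm ENNReal.top_ne_zero f n

lemma norm_betaSeq (b : ℝ) : ‖betaSeq b‖ = |b| :=
  le_antisymm (lp.norm_le_of_forall_le (abs_nonneg b) fun _ => (Real.norm_eq_abs b).le)
    (lp.norm_apply_le_norm ENNReal.top_ne_zero (betaSeq b) 0)

lemma tendsto_betaSeq (b : ℝ) : Tendsto (betaSeq b : ℕ → ℝ) atTop (𝓝 b) :=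
  tendsto_const_nhds

section

variable {x : ellInfty} {L : ℝ}

lemma abs_le_norm_sub_of_mem_c0 (hx : Tendsto (x : ℕ → ℝ) atTop (𝓝 L)) {z : ellInfty}
    (hz : z ∈ c0) : |L| ≤ ‖x - z‖ := by
  have hxz : Tendsto (⇑(x - z)) atTop (𝓝 (L - 0)) := by
    rw [lp.coeFn_sub]
    exact hx.sub hz
  simpa using norm_le_norm_of_tendsto hxz

lemma sub_betaSeq_mem_c0 (hx : Tendsto (x : ℕ → ℝ) atTop (𝓝 L)) : x - betaSeq L ∈ c0 := by
  have hsub : Tendsto (⇑(x - betaSeq L)) atTop (𝓝 (L - L)) := by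
    rw [lp.coeFn_sub]
    exact hx.sub (tendsto_betaSeq L)
  rwa [sub_self] at hsub

lemma norm_sub_sub_betaSeq (x : ellInfty) (L : ℝ) : ‖x - (x - betaSeq L)‖ = |L| := by
  rw [sub_sub_cancel, norm_betaSeq]

lemma projC0_eq_of_tendsto (hx : Tendsto (x : ℕ → ℝ) atTop (𝓝 L)) :
    projC0 x = {y | y ∈ c0 ∧ ‖x - y‖ = |L|} := by
  ext y
  constructor
  · rintro ⟨hy, hmin⟩
    refine ⟨hy, le_antisymm ?_ (abs_le_norm_sub_of_mem_c0 hx hy)⟩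
    exact norm_sub_sub_betaSeq x L ▸ hmin _ (sub_betaSeq_mem_c0 hx)
  · rintro ⟨hy, hdist⟩
    exact ⟨hy, fun z hz => hdist ▸ abs_le_norm_sub_of_mem_c0 hx hz⟩

lemma sub_betaSeq_mem_projC0 (hx : Tendsto (x : ℕ → ℝ) atTop (𝓝 L)) :
    x - betaSeq L ∈ projC0 x := by
  rw [projC0_eq_of_tendsto hx]
  exact ⟨sub_betaSeq_mem_c0 hx, norm_sub_sub_betaSeq x L⟩

end

/-- Proposition 4.3. For every `x ∈ c` with limit `L = L(x)`, the set of
best approximations of `x` from `c₀` is `P_{c₀}(x) = {y ∈ c₀ : ‖x − y‖ = |L(x)|}`.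
In particular `h(x) = x − β_{L(x)} ∈ P_{c₀}(x)`, and for every real `b ≠ 0`,
`P_{c₀}(β_b) = {y ∈ c₀ : ‖β_b − y‖ = |b|}`. -/
theorem stmt_10 (x : ellInfty) (L : ℝ) (hx : Tendsto (x : ℕ → ℝ) atTop (nhds L)) :
    (projC0 x = {y | y ∈ c0 ∧ ‖x - y‖ = |L|}) ∧
    (x - betaSeq L ∈ projC0 x) ∧
    (∀ b : ℝ, b ≠ 0 → projC0 (betaSeq b) = {y | y ∈ c0 ∧ ‖betaSeq b - y‖ = |b|}) :=
  ⟨projC0_eq_of_tendsto hx, sub_betaSeq_mem_projC0 hx,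
    fun b _ => projC0_eq_of_tendsto (tendsto_betaSeq b)⟩
end

section
/- Let x ∈ c and let φ be the continuous linear functional on c represented by (q₀, 0, 0, …) for some q₀ ∈ ℝ, i.e., ⟨φ, z⟩ = q₀·L(z) for z ∈ c. Then the Mordukhovich (Fréchet) coderivative of the metric projection P_{c₀} at the point (x, h(x)) satisfies D̂*P_{c₀}(x, h(x))(φ) = {θ*}, where θ* is the zero functional on c. -/
open scoped ENNReal
open Filter

noncomputable def eSeq (k : ℕ) (t : ℝ) : ellInfty :=
  ⟨fun n => if n = k then t else 0, memℓp_infty ⟨|t|, by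
    rintro r ⟨n, rfl⟩
    dsimp only
    split <;> simp [Real.norm_eq_abs, abs_nonneg]⟩⟩

lemma eSeq_apply (k : ℕ) (t : ℝ) (n : ℕ) : (eSeq k t : ℕ → ℝ) n = if n = k then t else 0 := rfl

lemma betaSeq_apply (b : ℝ) (n : ℕ) : (betaSeq b : ℕ → ℝ) n = b := rfl

lemma eSeq_norm_le (k : ℕ) (t : ℝ) : ‖eSeq k t‖ ≤ |t| :=
  lp.norm_le_of_forall_le (abs_nonneg t) fun i => by
    rw [eSeq_apply]; split <;> simp [Real.norm_eq_abs, abs_nonneg]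

lemma betaSeq_norm_le (b : ℝ) : ‖betaSeq b‖ ≤ |b| :=
  lp.norm_le_of_forall_le (abs_nonneg b) fun i => by
    rw [betaSeq_apply]; simp [Real.norm_eq_abs]

lemma betaSeq_add (a b : ℝ) : betaSeq (a + b) = betaSeq a + betaSeq b :=
  lp.ext (by rw [lp.coeFn_add]; rfl)

lemma proj_mem (u : ellInfty) (Lu : ℝ) (hu : Tendsto (u : ℕ → ℝ) atTop (nhds Lu)) :
    u - betaSeq Lu ∈ projC0 u := by
  constructor
  · show Tendsto _ _ _
    have hcoe : ((u - betaSeq Lu : ellInfty) : ℕ → ℝ) = fun n => (u : ℕ → ℝ) n - Lu := by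
      rw [lp.coeFn_sub]; rfl
    rw [hcoe]
    simpa using hu.sub_const Lu
  · intro z hz
    have h1 : u - (u - betaSeq Lu) = betaSeq Lu := by abel
    rw [h1]
    refine (betaSeq_norm_le Lu).trans ?_
    have hz' : Tendsto (z : ℕ → ℝ) atTop (nhds 0) := hz
    have hsub : Tendsto (fun n => (u : ℕ → ℝ) n - (z : ℕ → ℝ) n) atTop (nhds (Lu - 0)) :=
      hu.sub hz'
    rw [sub_zero] at hsub
    have hlim := hsub.abs
    refine le_of_tendsto hlim (Filter.Eventually.of_forall fun n => ?_)
    have h2 := lp.norm_apply_le_norm (E := fun _ : ℕ => ℝ) ENNReal.top_ne_zero (u - z) n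
    rw [lp.coeFn_sub, Pi.sub_apply, Real.norm_eq_abs] at h2
    exact h2

/-- `ψ` (represented by the summable sequence `p`) belongs to the Mordukhovich (Fréchet)
coderivative `D̂*P_{c₀}(x, h(x))(φ)` of the metric projection `P_{c₀} : c ⇉ c₀` at the point
`(x, h(x))`, where `x ∈ c` has limit `L`, `h(x) = x − β_L`, and `φ` is represented by the
summable sequence `q`.  A functional represented by `(q₀, q₁, …)` acts on `w ∈ c` with limit
`Lw` by `q₀·Lw + ∑_{n≥1} qₙ wₙ`; here `u − x ∈ c` has limit `Lu − L` and `v − h(x) ∈ c₀`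
has limit `0`.  The condition is the ε-δ form of
`limsup_{(u,v)→(x,h(x)), v ∈ P_{c₀}(u), u ∈ c}
  (⟨ψ, u − x⟩ − ⟨φ, v − h(x)⟩)/(‖u − x‖ + ‖v − h(x)‖) ≤ 0`. -/
def inCoderivC0 (x : ellInfty) (L : ℝ) (p q : ℕ → ℝ) : Prop :=
  ∀ ε > (0 : ℝ), ∃ δ > (0 : ℝ), ∀ (u : ellInfty) (Lu : ℝ),
    Tendsto (u : ℕ → ℝ) atTop (nhds Lu) → ∀ v ∈ projC0 u,
      ‖u - x‖ < δ → ‖v - (x - betaSeq L)‖ < δ →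
        (p 0 * (Lu - L) + ∑' n, p (n + 1) * (u - x) n) -
            (q 0 * 0 + ∑' n, q (n + 1) * (v - (x - betaSeq L)) n) ≤
          ε * (‖u - x‖ + ‖v - (x - betaSeq L)‖)

/-- Theorem 4.4 (i). Let `x ∈ c` with limit `L` and let `φ` be the
functional on `c` represented by `(q₀, 0, 0, …)`, i.e. `⟨φ, z⟩ = q₀·L(z)`. Then the
Mordukhovich (Fréchet) coderivative of `P_{c₀}` at `(x, h(x))` satisfies
`D̂*P_{c₀}(x, h(x))(φ) = {θ*}`, the zero functional only. -/
theorem stmt_11 (x : ellInfty) (L : ℝ) (hx : Tendsto (x : ℕ → ℝ) atTop (nhds L))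
    (q₀ : ℝ) :
    {p : ℕ → ℝ | Summable (fun n => |p n|) ∧
        inCoderivC0 x L p (fun n => if n = 0 then q₀ else 0)} =
      {fun _ => (0 : ℝ)} := by
  ext p
  simp only [Set.mem_setOf_eq, Set.mem_singleton_iff]
  constructor
  · rintro ⟨hsum, hcod⟩
    -- first: p (k+1) = 0 for all k
    have hk : ∀ k : ℕ, p (k + 1) = 0 := by
      intro k
      have hb : ∀ ε > (0 : ℝ), |p (k + 1)| ≤ 2 * ε := by
        intro ε hε
        obtain ⟨δ, hδ, H⟩ := hcod ε hε
        have key : ∀ s : ℝ, |s| = 1 → s * (p (k + 1) * (δ / 2)) ≤ ε * δ := by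
          intro s hs
          set t : ℝ := s * (δ / 2) with ht_def
          have ht : |t| = δ / 2 := by
            rw [ht_def, abs_mul, hs, one_mul, abs_of_pos (by linarith)]
          set u : ellInfty := x + eSeq k t with hu_def
          have hux : u - x = eSeq k t := by rw [hu_def]; abel
          have hu : Tendsto (u : ℕ → ℝ) atTop (nhds L) := by
            have hcoe : (u : ℕ → ℝ) = fun n => (x : ℕ → ℝ) n + (eSeq k t : ℕ → ℝ) n := by
              rw [hu_def, lp.coeFn_add]; rfl
            rw [hcoe]
            have heq : ∀ᶠ n in atTop, (x : ℕ → ℝ) n =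
                (x : ℕ → ℝ) n + (eSeq k t : ℕ → ℝ) n := by
              filter_upwards [eventually_gt_atTop k] with n hn
              rw [eSeq_apply, if_neg (by omega)]
              ring
            exact hx.congr' heq
          set v : ellInfty := u - betaSeq L with hv_def
          have hv : v ∈ projC0 u := proj_mem u L hu
          have hvh : v - (x - betaSeq L) = eSeq k t := by
            rw [hv_def, hu_def]; abel
          have hne : ‖eSeq k t‖ ≤ δ / 2 := (eSeq_norm_le k t).trans_eq ht
          have hlt : ‖eSeq k t‖ < δ := lt_of_le_of_lt hne (by linarith)
          have hIneq := H u L hu v hv (by rw [hux]; exact hlt) (by rw [hvh]; exact hlt)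
          rw [hux, hvh] at hIneq
          have hts1 : (∑' n, p (n + 1) * (eSeq k t : ℕ → ℝ) n) = p (k + 1) * t := by
            rw [tsum_eq_single k (fun n hn => by rw [eSeq_apply, if_neg hn, mul_zero])]
            rw [eSeq_apply, if_pos rfl]
          have hts2 : (∑' n, (if n + 1 = 0 then q₀ else 0) * (eSeq k t : ℕ → ℝ) n) = 0 := by
            have : (fun n : ℕ => (if n + 1 = 0 then q₀ else 0) * (eSeq k t : ℕ → ℝ) n)
                = fun _ => (0 : ℝ) := by
              funext n; rw [if_neg (Nat.succ_ne_zero n), zero_mul]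
            rw [this, tsum_zero]
          simp only [hts1, hts2, if_true, mul_zero, zero_add, add_zero, sub_zero] at hIneq
          have h1 : p 0 * (L - L) + p (k + 1) * t = s * (p (k + 1) * (δ / 2)) := by
            rw [ht_def]; ring
          rw [h1] at hIneq
          refine hIneq.trans ?_
          nlinarith [norm_nonneg (eSeq k t)]
        have k1 := key 1 (by norm_num)
        have k2 := key (-1) (by norm_num)
        rcases abs_cases (p (k + 1)) with ⟨h, _⟩ | ⟨h, _⟩ <;> rw [h] <;> nlinarith
      by_contra hne
      have hpos : 0 < |p (k + 1)| := abs_pos.mpr hne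
      have := hb (|p (k + 1)| / 4) (by linarith)
      linarith
    -- now p 0 = 0
    have h0 : p 0 = 0 := by
      have hb : ∀ ε > (0 : ℝ), |p 0| ≤ ε := by
        intro ε hε
        obtain ⟨δ, hδ, H⟩ := hcod ε hε
        have key : ∀ s : ℝ, |s| = 1 → s * (p 0 * (δ / 2)) ≤ ε * (δ / 2) := by
          intro s hs
          set t : ℝ := s * (δ / 2) with ht_def
          have ht : |t| = δ / 2 := by
            rw [ht_def, abs_mul, hs, one_mul, abs_of_pos (by linarith)]
          set u : ellInfty := x + betaSeq t with hu_def
          have hux : u - x = betaSeq t := by rw [hu_def]; abel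
          have hu : Tendsto (u : ℕ → ℝ) atTop (nhds (L + t)) := by
            have hcoe : (u : ℕ → ℝ) = fun n => (x : ℕ → ℝ) n + t := by
              rw [hu_def, lp.coeFn_add]; rfl
            rw [hcoe]
            exact hx.add_const t
          set v : ellInfty := u - betaSeq (L + t) with hv_def
          have hv : v ∈ projC0 u := proj_mem u (L + t) hu
          have hvh : v - (x - betaSeq L) = 0 := by
            rw [hv_def, hu_def, betaSeq_add]; abel
          have hne : ‖betaSeq t‖ ≤ δ / 2 := (betaSeq_norm_le t).trans_eq ht
          have hlt : ‖betaSeq t‖ < δ := lt_of_le_of_lt hne (by linarith)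
          have hIneq := H u (L + t) hu v hv (by rw [hux]; exact hlt)
            (by rw [hvh, norm_zero]; exact hδ)
          rw [hux, hvh] at hIneq
          have hts1 : (∑' n, p (n + 1) * (betaSeq t : ℕ → ℝ) n) = 0 := by
            have : (fun n : ℕ => p (n + 1) * (betaSeq t : ℕ → ℝ) n) = fun _ => (0 : ℝ) := by
              funext n; rw [hk n, zero_mul]
            rw [this, tsum_zero]
          have hts2 : (∑' n, (if n + 1 = 0 then q₀ else 0) * ((0 : ellInfty) : ℕ → ℝ) n) = 0 := by
            have : (fun n : ℕ => (if n + 1 = 0 then q₀ else 0) * ((0 : ellInfty) : ℕ → ℝ) n)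
                = fun _ => (0 : ℝ) := by
              funext n; rw [if_neg (Nat.succ_ne_zero n), zero_mul]
            rw [this, tsum_zero]
          simp only [hts1, hts2, if_true, mul_zero, zero_add, add_zero, sub_zero,
            norm_zero] at hIneq
          have h1 : p 0 * (L + t - L) = s * (p 0 * (δ / 2)) := by
            rw [ht_def]; ring
          rw [h1] at hIneq
          refine hIneq.trans ?_
          nlinarith [norm_nonneg (betaSeq t)]
        have k1 := key 1 (by norm_num)
        have k2 := key (-1) (by norm_num)
        rcases abs_cases (p 0) with ⟨h, _⟩ | ⟨h, _⟩ <;> rw [h] <;> nlinarith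
      by_contra hne
      have hpos : 0 < |p 0| := abs_pos.mpr hne
      have := hb (|p 0| / 2) (by linarith)
      linarith
    funext n
    cases n with
    | zero => exact h0
    | succ k => exact hk k
  · rintro rfl
    constructor
    · simpa using summable_zero
    · intro ε hε
      refine ⟨1, one_pos, fun u Lu hu v hv h1 h2 => ?_⟩
      have ha : ∀ w : ellInfty, (∑' n, (0 : ℝ) * (w : ℕ → ℝ) n) = 0 := fun w => by
        simp only [zero_mul, tsum_zero]
      show (0 * (Lu - L) + ∑' n, (0 : ℝ) * ((u - x : ellInfty) : ℕ → ℝ) n) -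
          (q₀ * 0 + ∑' n, (0 : ℝ) * ((v - (x - betaSeq L) : ellInfty) : ℕ → ℝ) n) ≤
        ε * (‖u - x‖ + ‖v - (x - betaSeq L)‖)
      rw [ha (u - x), ha (v - (x - betaSeq L))]
      have h0 : (0 * (Lu - L) + 0) - (q₀ * 0 + 0) = (0 : ℝ) := by ring
      rw [h0]
      exact mul_nonneg hε.le (add_nonneg (norm_nonneg _) (norm_nonneg _))
end
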